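/- arXiv:0804.4626 — 3 statements merged into one kernel-verified Lean document; each statement's English description precedes it below -/
import Mathlib

section
/- If a rectangle partition (m^l) (i.e., l rows each of length m) is contained as a subdiagram (possibly after 180° rotation) in a skew diagram λ/μ, then every partition ν with Littlewood–Richardson coefficient c(λ; μ, ν) ≠ 0 contains the rectangle (m^l), i.e., ν has at least l parts of size at least m. -/
/-- `f : ℕ → ℕ` represents a partition (0-indexed parts): weakly decreasing
and eventually zero. -/
def IsPartition (f : ℕ → ℕ) : Prop :=
  (∀ ⦃i j : ℕ⦄, i ≤ j → f j ≤ f i) ∧ ∃ N, ∀ i, N ≤ i → f i = 0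

/-- The box `(i, j)` (row `i`, column `j`, both 0-indexed) lies in the skew
diagram `l / m`. -/
def InSkew (l m : ℕ → ℕ) (p : ℕ × ℕ) : Prop :=
  m p.1 ≤ p.2 ∧ p.2 < l p.1

/-- `T` is a Littlewood–Richardson tableau of skew shape `l / m` and content `n`:
entries are positive exactly on the shape, rows weakly increase, columns strictly
increase, the number of entries equal to `k + 1` is `n k`, and every prefix of the
reverse reading word (right to left, top to bottom) is a lattice word. -/
structure IsLR (l m n : ℕ → ℕ) (T : ℕ → ℕ → ℕ) : Prop where
  support : ∀ p : ℕ × ℕ, T p.1 p.2 ≠ 0 ↔ InSkew l m p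
  row_weak : ∀ i j, InSkew l m (i, j) → InSkew l m (i, j + 1) → T i j ≤ T i (j + 1)
  col_strict : ∀ i j, InSkew l m (i, j) → InSkew l m (i + 1, j) → T i j < T (i + 1) j
  content : ∀ k : ℕ, Nat.card {p : ℕ × ℕ // T p.1 p.2 = k + 1} = n k
  lattice : ∀ i j k : ℕ,
    Nat.card {p : ℕ × ℕ // T p.1 p.2 = k + 2 ∧ (p.1 < i ∨ (p.1 = i ∧ j ≤ p.2))} ≤
      Nat.card {p : ℕ × ℕ // T p.1 p.2 = k + 1 ∧ (p.1 < i ∨ (p.1 = i ∧ j ≤ p.2))}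

/-- The Littlewood–Richardson coefficient `c(l; m, n)`: the number of LR tableaux
of shape `l / m` and content `n`. -/
noncomputable def LR (l m n : ℕ → ℕ) : ℕ :=
  Nat.card {T : ℕ → ℕ → ℕ // IsLR l m n T}

/-- The partition `a` is contained in the skew diagram `l / m`: some translate
of `a`, or of `a` rotated by 180°, is a subset of the diagram. -/
def ContainedIn (a l m : ℕ → ℕ) : Prop :=
  (∃ r c, ∀ i j, j < a i → InSkew l m (r + i, c + j)) ∨
  (∃ r c, ∀ i j, j < a i → i ≤ r ∧ j ≤ c ∧ InSkew l m (r - i, c - j))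

/-- The complement of `f` in the rectangle with `L` rows of length `k`,
rotated by 180°, regarded as a partition. -/
def RotCompl (k L : ℕ) (f : ℕ → ℕ) : ℕ → ℕ :=
  fun i => if i < L then k - f (L - 1 - i) else 0

/-!
Column strictness makes every entry of the bottom row of the rectangle at least `L`. The
lattice condition, read at the first `k + 2` of row `ρ`, shows that there are no more `k + 2`s
in rows `≤ ρ` than `k + 1`s in rows `< ρ`. Peeling off the entries equal to `k + 1`, a downward
induction on `k` (entries of row `r` are at most `r + 1`) bounds the number of entries `≥ k + 1`
in row `r` by the number of `k + 1`s in rows `≤ r`. For `k + 1 = L` this gives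
`M ≤ n (L - 1) ≤ n i`.
-/

/-- Entries equal to `v` in rows `< ρ` (row `ρ` itself excluded). -/
noncomputable def countAbove (T : ℕ → ℕ → ℕ) (v ρ : ℕ) : ℕ :=
  {p : ℕ × ℕ | T p.1 p.2 = v ∧ p.1 < ρ}.ncard

theorem exists_inSkew_block {l m : ℕ → ℕ} {M L : ℕ}
    (h : ContainedIn (fun i => if i < L then M else 0) l m) :
    ∃ R C, ∀ a < L, ∀ b < M, InSkew l m (R + a, C + b) := by
  rcases h with ⟨r, c, h⟩ | ⟨r, c, h⟩
  · exact ⟨r, c, fun a ha b hb => h a b (by simpa [ha] using hb)⟩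
  · rcases Nat.eq_zero_or_pos L with rfl | hL
    · exact ⟨0, 0, fun a ha => absurd ha (Nat.not_lt_zero a)⟩
    rcases Nat.eq_zero_or_pos M with rfl | hM
    · exact ⟨0, 0, fun _ _ b hb => absurd hb (Nat.not_lt_zero b)⟩
    have hr : L - 1 ≤ r := (h (L - 1) 0 (by simp [hM, hL])).1
    have hc : M - 1 ≤ c := (h 0 (M - 1) (by simp [hL]; omega)).2.1
    refine ⟨r - (L - 1), c - (M - 1), fun a ha b hb => ?_⟩
    obtain ⟨-, -, hab⟩ := h (L - 1 - a) (M - 1 - b) (by simp [show L - 1 - a < L by omega]; omega)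
    rwa [show r - (L - 1) + a = r - (L - 1 - a) by omega,
      show c - (M - 1) + b = c - (M - 1 - b) by omega]

namespace IsLR

variable {l m n : ℕ → ℕ} {T : ℕ → ℕ → ℕ}

theorem finite_support (hl : IsPartition l) (hT : IsLR l m n T) :
    {p : ℕ × ℕ | T p.1 p.2 ≠ 0}.Finite := by
  obtain ⟨N, hN⟩ := hl.2
  refine ((Set.finite_Iio N).prod (Set.finite_Iio (l 0))).subset fun p hp => ?_
  obtain ⟨-, hcol⟩ := (hT.support p).1 hp
  refine ⟨Set.mem_Iio.2 (lt_of_not_ge fun hpN => ?_), lt_of_lt_of_le hcol (hl.1 (Nat.zero_le _))⟩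
  rw [hN _ hpN] at hcol
  exact Nat.not_lt_zero _ hcol

theorem finite_of_subset_setOf_eq_succ (hl : IsPartition l) (hT : IsLR l m n T) {v : ℕ}
    {s : Set (ℕ × ℕ)} (hs : s ⊆ {p | T p.1 p.2 = v + 1}) : s.Finite :=
  (hT.finite_support hl).subset fun p hp => by
    rw [Set.mem_ofPred_eq, show T p.1 p.2 = v + 1 from hs hp]
    exact Nat.succ_ne_zero v

theorem finite_setOf_row_ge (hT : IsLR l m n T) (r k : ℕ) : {j | k + 1 ≤ T r j}.Finite :=
  (Set.finite_Iio (l r)).subset fun j hj =>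
    ((hT.support (r, j)).1 (Nat.one_le_iff_ne_zero.1 (le_of_add_le_right hj))).2

theorem le_of_le_of_inSkew (hT : IsLR l m n T) {i j j' : ℕ} (hjj' : j ≤ j')
    (hj : InSkew l m (i, j)) (hj' : InSkew l m (i, j')) : T i j ≤ T i j' := by
  induction j', hjj' using Nat.le_induction with
  | base => exact le_rfl
  | succ x hx ih =>
    have hxs : InSkew l m (i, x) := ⟨hj.1.trans hx, (Nat.lt_succ_self x).trans hj'.2⟩
    exact (ih hxs).trans (hT.row_weak i x hxs hj')

theorem add_one_le_of_column (hT : IsLR l m n T) {i j a : ℕ}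
    (hcol : ∀ a' ≤ a, InSkew l m (i + a', j)) : a + 1 ≤ T (i + a) j := by
  induction a with
  | zero => exact Nat.one_le_iff_ne_zero.2 ((hT.support (i + 0, j)).2 (hcol 0 le_rfl))
  | succ a ih =>
    have hlt := hT.col_strict (i + a) j (hcol a (by omega)) (hcol (a + 1) le_rfl)
    have := ih fun a' ha' => hcol a' (by omega)
    rw [← add_assoc]
    omega

theorem countAbove_le (hl : IsPartition l) (hT : IsLR l m n T) (k ρ : ℕ) :
    countAbove T (k + 1) ρ ≤ n k := by
  calc countAbove T (k + 1) ρ ≤ {p : ℕ × ℕ | T p.1 p.2 = k + 1}.ncard :=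
        Set.ncard_le_ncard (fun p hp => hp.1) (hT.finite_of_subset_setOf_eq_succ hl le_rfl)
    _ = n k := by rw [← Nat.card_coe_set_eq]; exact hT.content k

theorem countAbove_succ (hl : IsPartition l) (hT : IsLR l m n T) (v ρ : ℕ) :
    countAbove T (v + 1) (ρ + 1) = countAbove T (v + 1) ρ + {j | T ρ j = v + 1}.ncard := by
  have hsplit : {p : ℕ × ℕ | T p.1 p.2 = v + 1 ∧ p.1 < ρ + 1} =
      {p : ℕ × ℕ | T p.1 p.2 = v + 1 ∧ p.1 < ρ} ∪ (Prod.mk ρ '' {j | T ρ j = v + 1}) := by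
    ext ⟨a, b⟩
    simp only [Set.mem_ofPred_eq, Set.mem_union, Set.mem_image, Prod.mk.injEq]
    constructor
    · rintro ⟨hv, ha⟩
      rcases Nat.lt_succ_iff_lt_or_eq.1 ha with ha | rfl
      exacts [Or.inl ⟨hv, ha⟩, Or.inr ⟨b, hv, rfl, rfl⟩]
    · rintro (⟨hv, ha⟩ | ⟨b, hv, rfl, rfl⟩)
      exacts [⟨hv, ha.trans (Nat.lt_succ_self ρ)⟩, ⟨hv, Nat.lt_succ_self _⟩]
  rw [countAbove, countAbove, hsplit,
    Set.ncard_union_eq _ (hT.finite_of_subset_setOf_eq_succ hl fun p hp => hp.1)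
      (hT.finite_of_subset_setOf_eq_succ hl (by rintro _ ⟨b, hb, rfl⟩; exact hb)),
    Set.ncard_image_of_injective _ (Prod.mk_right_injective ρ)]
  rw [Set.disjoint_left]
  rintro _ ⟨-, ha⟩ ⟨b, -, rfl⟩
  exact lt_irrefl ρ ha

/-- `j₀` is the first `k + 2` of row `ρ`, or the end of the row if there is none. -/
theorem exists_separating_column (hT : IsLR l m n T) (k ρ : ℕ) :
    ∃ j₀, (∀ j, T ρ j = k + 2 → j₀ ≤ j) ∧ ∀ j, T ρ j = k + 1 → j < j₀ := by
  by_cases hex : ∃ j, T ρ j = k + 2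
  · refine ⟨Nat.find hex, fun j hj => Nat.find_min' hex hj, fun j hj => lt_of_not_ge fun hle => ?_⟩
    have hmono := hT.le_of_le_of_inSkew hle ((hT.support (ρ, _)).1 (by simp [Nat.find_spec hex]))
      ((hT.support (ρ, j)).1 (by simp [hj]))
    rw [Nat.find_spec hex, hj] at hmono
    omega
  · exact ⟨l ρ, fun j hj => absurd ⟨j, hj⟩ hex,
      fun j hj => ((hT.support (ρ, j)).1 (by simp [hj])).2⟩

/-- The lattice condition, read at the first `k + 2` of row `ρ`. -/
theorem countAbove_succ_le (hT : IsLR l m n T) (k ρ : ℕ) :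
    countAbove T (k + 2) (ρ + 1) ≤ countAbove T (k + 1) ρ := by
  obtain ⟨j₀, hge, hlt⟩ := hT.exists_separating_column k ρ
  have hA : {p : ℕ × ℕ | T p.1 p.2 = k + 2 ∧ p.1 < ρ + 1} =
      {p : ℕ × ℕ | T p.1 p.2 = k + 2 ∧ (p.1 < ρ ∨ (p.1 = ρ ∧ j₀ ≤ p.2))} := by
    ext ⟨a, b⟩
    simp only [Set.mem_ofPred_eq, and_congr_right_iff]
    intro hv
    constructor
    · intro ha
      rcases Nat.lt_succ_iff_lt_or_eq.1 ha with ha | rfl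
      exacts [Or.inl ha, Or.inr ⟨rfl, hge b hv⟩]
    · rintro (ha | ⟨rfl, -⟩) <;> omega
  have hB : {p : ℕ × ℕ | T p.1 p.2 = k + 1 ∧ (p.1 < ρ ∨ (p.1 = ρ ∧ j₀ ≤ p.2))} =
      {p : ℕ × ℕ | T p.1 p.2 = k + 1 ∧ p.1 < ρ} := by
    ext ⟨a, b⟩
    simp only [Set.mem_ofPred_eq, and_congr_right_iff]
    intro hv
    constructor
    · rintro (ha | ⟨rfl, hb⟩)
      exacts [ha, absurd (hlt b hv) (not_lt.2 hb)]
    · exact Or.inl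
  rw [countAbove, countAbove, hA, ← hB, ← Nat.card_coe_set_eq, ← Nat.card_coe_set_eq]
  exact hT.lattice ρ j₀ k

theorem countAbove_eq_zero (hT : IsLR l m n T) (k ρ : ℕ) : countAbove T (k + ρ + 1) ρ = 0 := by
  induction ρ with
  | zero => simp [countAbove]
  | succ ρ ih => exact Nat.eq_zero_of_le_zero ((hT.countAbove_succ_le (k + ρ) ρ).trans_eq ih)

theorem le_succ_row (hl : IsPartition l) (hT : IsLR l m n T) (i j : ℕ) : T i j ≤ i + 1 := by
  by_contra! hgt
  obtain ⟨k, hk⟩ : ∃ k, T i j = k + (i + 1) + 1 := ⟨T i j - (i + 2), by omega⟩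
  have := (Set.ncard_pos (s := {p : ℕ × ℕ | T p.1 p.2 = k + (i + 1) + 1 ∧ p.1 < i + 1})
    (hT.finite_of_subset_setOf_eq_succ hl fun p hp => hp.1)).2 ⟨(i, j), hk, Nat.lt_succ_self i⟩
  rw [← countAbove, hT.countAbove_eq_zero] at this
  exact lt_irrefl 0 this

theorem ncard_row_ge_le (hl : IsPartition l) (hT : IsLR l m n T) (r k : ℕ) :
    {j | k + 1 ≤ T r j}.ncard ≤ countAbove T (k + 1) (r + 1) := by
  suffices ∀ d k, r + 1 ≤ k + d → {j | k + 1 ≤ T r j}.ncard ≤ countAbove T (k + 1) (r + 1) from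
    this (r + 1) k (Nat.le_add_left _ _)
  intro d
  induction d with
  | zero =>
    intro k hk
    have hempty : {j | k + 1 ≤ T r j} = ∅ :=
      Set.eq_empty_of_forall_notMem fun j hj => by
        have := hT.le_succ_row hl r j
        rw [Set.mem_ofPred_eq] at hj
        omega
    rw [hempty, Set.ncard_empty]
    exact Nat.zero_le _
  | succ d ih =>
    intro k hk
    have hsplit : {j | k + 1 ≤ T r j} = {j | T r j = k + 1} ∪ {j | k + 1 + 1 ≤ T r j} := by
      ext j; simp only [Set.mem_ofPred_eq, Set.mem_union]; omega
    have hdisj : Disjoint {j | T r j = k + 1} {j | k + 1 + 1 ≤ T r j} :=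
      Set.disjoint_left.2 fun j hj hj' => by
        rw [Set.mem_ofPred_eq] at hj hj'
        omega
    calc {j | k + 1 ≤ T r j}.ncard
        = {j | T r j = k + 1}.ncard + {j | k + 1 + 1 ≤ T r j}.ncard := by
          rw [hsplit, Set.ncard_union_eq hdisj ((hT.finite_setOf_row_ge r k).subset
            fun j hj => le_of_eq hj.symm) (hT.finite_setOf_row_ge r (k + 1))]
      _ ≤ {j | T r j = k + 1}.ncard + countAbove T (k + 2) (r + 1) :=
          Nat.add_le_add_left (ih (k + 1) (by omega)) _
      _ ≤ {j | T r j = k + 1}.ncard + countAbove T (k + 1) r :=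
          Nat.add_le_add_left (hT.countAbove_succ_le k r) _
      _ = countAbove T (k + 1) (r + 1) := by rw [hT.countAbove_succ hl, add_comm]

end IsLR

theorem stmt0_general (l m : ℕ → ℕ) (hl : IsPartition l) (M L : ℕ)
    (hrect : ContainedIn (fun i => if i < L then M else 0) l m)
    (n : ℕ → ℕ) (hn : IsPartition n) (hLR : LR l m n ≠ 0) :
    ∀ i, i < L → M ≤ n i := by
  intro i hi
  obtain ⟨⟨T, hT⟩⟩ := (Nat.card_ne_zero.mp hLR).1
  obtain ⟨R, C, hRC⟩ := exists_inSkew_block hrect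
  obtain ⟨K, rfl⟩ : ∃ K, L = K + 1 := ⟨L - 1, by omega⟩
  have hbottom : Set.Ico C (C + M) ⊆ {j | K + 1 ≤ T (R + K) j} := fun j ⟨hCj, hjM⟩ => by
    obtain ⟨b, rfl⟩ := Nat.exists_eq_add_of_le hCj
    exact hT.add_one_le_of_column fun a ha => hRC a (by omega) b (by omega)
  calc M = (Set.Ico C (C + M)).ncard := by simp
    _ ≤ {j | K + 1 ≤ T (R + K) j}.ncard :=
        Set.ncard_le_ncard hbottom (hT.finite_setOf_row_ge _ _)
    _ ≤ countAbove T (K + 1) (R + K + 1) := hT.ncard_row_ge_le hl _ _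
    _ ≤ n K := hT.countAbove_le hl _ _
    _ ≤ n i := hn.1 (Nat.lt_succ_iff.1 hi)

/-- If a rectangle `(M^L)` is contained in the skew diagram `l / m`, then every
partition `n` with `c(l; m, n) ≠ 0` contains the rectangle `(M^L)`. -/
theorem stmt0 (l m : ℕ → ℕ) (hl : IsPartition l) (hm : IsPartition m)
    (hml : ∀ i, m i ≤ l i) (M L : ℕ)
    (hrect : ContainedIn (fun i => if i < L then M else 0) l m)
    (n : ℕ → ℕ) (hn : IsPartition n) (hLR : LR l m n ≠ 0) :
    ∀ i, i < L → M ≤ n i :=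
  stmt0_general l m hl M L hrect n hn hLR
end

section
/- Let λ/μ be a skew diagram, and let α be the partition obtained by sorting the row lengths λ_i − μ_i (taking only positive values) into weakly decreasing order. Then c(λ; μ, α) ≠ 0, i.e., the character [α] appears in the skew character [λ/μ]. -/
/-! Fill the box at distance `d` from the right end of row `i` with one more than the number of
rows above `i` that also reach distance `d`. Among the boxes at a fixed distance `d` the values
are then `1, 2, …, c_d` from top to bottom, where `c_d` is the number of rows of length at least
`d`. A prefix of the reverse reading word meets these boxes in an initial segment of rows, hence
in the values `1, …, t` for some `t`: this is the lattice property. The content is right because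
`k < c_d ↔ d ≤ a k`, `a` being the decreasing rearrangement of the row lengths. As LR tableaux
of a finite shape and finite content form a finite set, this one filling makes `c(l; m, a)`
positive. -/

open Finset Nat

lemma card_filter_count_eq (p : ℕ → Prop) [DecidablePred p] (v t : ℕ) :
    #{i ∈ range t | p i ∧ count p i = v} = if v < count p t then 1 else 0 := by
  induction t with
  | zero => simp
  | succ t ih =>
    rw [range_add_one, filter_insert, count_succ]
    by_cases ht : p t ∧ count p t = v
    · rw [if_pos ht, card_insert_of_notMem (by simp), ih]
      simp [ht.1, ht.2]
    · rw [if_neg ht, ih]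
      by_cases hp : p t
      · have : count p t ≠ v := fun h => ht ⟨hp, h⟩
        simp only [hp, if_true]
        split_ifs <;> omega
      · simp [hp]

lemma card_filter_eq_natCard {α : Type*} (s : Finset α) {P : α → Prop} [DecidablePred P]
    (hs : ∀ x, P x → x ∈ s) : #{x ∈ s | P x} = Nat.card {x // P x} := by
  rw [← Nat.card_eq_finsetCard]
  exact Nat.card_congr (Equiv.subtypeEquivRight fun x => by simpa using hs x)

lemma card_filter_le_eq_sum (s : Finset ℕ) {f : ℕ → ℕ} {B : ℕ} (hB : ∀ i, f i ≤ B) (d : ℕ) :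
    #{i ∈ s | d ≤ f i} = ∑ c ∈ Icc d B, #{i ∈ s | f i = c} := by
  rw [card_eq_sum_card_fiberwise (f := f) (t := Icc d B) fun i hi => by
    simp only [coe_filter, Set.mem_ofPred_eq] at hi; simpa using ⟨hi.2, hB i⟩]
  refine sum_congr rfl fun c hc => ?_
  rw [filter_filter]
  exact congrArg card (filter_congr fun i _ => by simp at hc; omega)

lemma count_le_eq_of_natCard_eq {f g : ℕ → ℕ} {N B : ℕ}
    (hf : ∀ i, N ≤ i → f i = 0) (hg : ∀ i, N ≤ i → g i = 0)
    (hfB : ∀ i, f i ≤ B) (hgB : ∀ i, g i ≤ B)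
    (hfg : ∀ c, Nat.card {i // f i = c + 1} = Nat.card {i // g i = c + 1}) {d : ℕ} (hd : 0 < d) :
    count (fun i => d ≤ f i) N = count (fun i => d ≤ g i) N := by
  rw [count_eq_card_filter_range, count_eq_card_filter_range, card_filter_le_eq_sum _ hfB,
    card_filter_le_eq_sum _ hgB]
  refine sum_congr rfl fun c hc => ?_
  obtain ⟨c, rfl⟩ : ∃ c', c = c' + 1 := ⟨c - 1, by simp at hc; omega⟩
  rw [card_filter_eq_natCard _ fun i hi => mem_range.mpr ?_,
    card_filter_eq_natCard _ fun i hi => mem_range.mpr ?_, hfg]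
  · by_contra h; rw [hg i (not_lt.mp h)] at hi; omega
  · by_contra h; rw [hf i (not_lt.mp h)] at hi; omega

lemma lt_count_le_iff {a : ℕ → ℕ} (ha : Antitone a) {N : ℕ} (hN : ∀ i, N ≤ i → a i = 0)
    {d : ℕ} (hd : 0 < d) (k : ℕ) : k < count (fun i => d ≤ a i) N ↔ d ≤ a k := by
  rw [count_eq_card_filter_range]
  constructor
  · intro hk
    by_contra hak
    have : {i ∈ range N | d ≤ a i} ⊆ range k := fun i hi => by
      simp only [mem_filter, mem_range] at hi ⊢
      by_contra h
      exact hak (hi.2.trans (ha (not_lt.mp h)))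
    simpa using hk.trans_le (card_le_card this)
  · intro hak
    have : range (k + 1) ⊆ {i ∈ range N | d ≤ a i} := fun i hi => by
      simp only [mem_filter, mem_range] at hi ⊢
      have hdi := hak.trans (ha (Nat.lt_succ_iff.mp hi))
      refine ⟨?_, hdi⟩
      by_contra h
      simp [hN i (not_lt.mp h)] at hdi; omega
    simpa using card_le_card this

section CanonicalFilling

variable (l m : ℕ → ℕ)

def canonicalFilling (i j : ℕ) : ℕ :=
  if m i ≤ j ∧ j < l i then count (fun i' => l i - j ≤ l i' - m i') i + 1 else 0

variable {l m}

lemma canonicalFilling_of_inSkew {i j : ℕ} (h : InSkew l m (i, j)) :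
    canonicalFilling l m i j = count (fun i' => l i - j ≤ l i' - m i') i + 1 :=
  if_pos h

lemma canonicalFilling_ne_zero_iff (p : ℕ × ℕ) :
    canonicalFilling l m p.1 p.2 ≠ 0 ↔ InSkew l m p := by
  unfold canonicalFilling InSkew
  split_ifs with h <;> simp [h]

lemma canonicalFilling_eq_succ_iff {i j v : ℕ} :
    canonicalFilling l m i j = v + 1 ↔
      InSkew l m (i, j) ∧ count (fun i' => l i - j ≤ l i' - m i') i = v := by
  unfold canonicalFilling InSkew
  split_ifs with h <;> simp [h]

lemma canonicalFilling_le_succ {i j : ℕ} (h : InSkew l m (i, j)) (h' : InSkew l m (i, j + 1)) :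
    canonicalFilling l m i j ≤ canonicalFilling l m i (j + 1) := by
  rw [canonicalFilling_of_inSkew h, canonicalFilling_of_inSkew h']
  exact Nat.succ_le_succ (count_mono_left fun i' _ hi' => by omega)

lemma canonicalFilling_lt_succ (hl : Antitone l) {i j : ℕ} (h : InSkew l m (i, j))
    (h' : InSkew l m (i + 1, j)) :
    canonicalFilling l m i j < canonicalFilling l m (i + 1) j := by
  have hli : l (i + 1) ≤ l i := hl (by omega)
  rw [canonicalFilling_of_inSkew h, canonicalFilling_of_inSkew h']
  obtain ⟨hmi, hji⟩ := h
  dsimp only at hmi hji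
  calc count (fun i' => l i - j ≤ l i' - m i') i + 1
      ≤ count (fun i' => l (i + 1) - j ≤ l i' - m i') i + 1 :=
        Nat.succ_le_succ (count_mono_left fun i' _ hi' => by omega)
    _ < count (fun i' => l (i + 1) - j ≤ l i' - m i') (i + 1) + 1 := by
        rw [count_succ, if_pos (by omega)]
        omega

/-- The prefix of the reading word ending at box `(I, J)` contains the box at distance `d` from
the right end of row `i` iff `i < if J + d ≤ l I then I + 1 else I`. -/
lemma natCard_canonicalFilling_prefix {B : ℕ} (hB : ∀ i, l i ≤ B) (I J v : ℕ) :
    Nat.card {p : ℕ × ℕ //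
        canonicalFilling l m p.1 p.2 = v + 1 ∧ (p.1 < I ∨ (p.1 = I ∧ J ≤ p.2))} =
      #{d ∈ Icc 1 B | v < count (fun i => d ≤ l i - m i) (if J + d ≤ l I then I + 1 else I)} := by
  set t : ℕ → ℕ := fun d => if J + d ≤ l I then I + 1 else I
  let S := (Icc 1 B).sigma fun d =>
    {i ∈ range (t d) | d ≤ l i - m i ∧ count (fun i' => d ≤ l i' - m i') i = v}
  have hto : ∀ p : {p : ℕ × ℕ //
      canonicalFilling l m p.1 p.2 = v + 1 ∧ (p.1 < I ∨ (p.1 = I ∧ J ≤ p.2))},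
      (⟨l p.1.1 - p.1.2, p.1.1⟩ : (_ : ℕ) × ℕ) ∈ S := by
    rintro ⟨⟨i, j⟩, hT, hpre⟩
    obtain ⟨⟨hmj, hjl⟩, hc⟩ := canonicalFilling_eq_succ_iff.mp hT
    have := hB i
    simp only [S, t, mem_sigma, mem_Icc, mem_filter, mem_range] at hmj hjl hpre ⊢
    refine ⟨by omega, ?_, by omega, hc⟩
    rcases hpre with hi | ⟨rfl, hJ⟩ <;> split_ifs <;> omega
  have hinv : ∀ q : S, canonicalFilling l m q.1.2 (l q.1.2 - q.1.1) = v + 1 ∧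
      (q.1.2 < I ∨ (q.1.2 = I ∧ J ≤ l q.1.2 - q.1.1)) := by
    rintro ⟨⟨d, i⟩, hq⟩
    simp only [S, t, mem_sigma, mem_Icc, mem_filter, mem_range] at hq ⊢
    obtain ⟨hd, hi, hdi, hc⟩ := hq
    have hd' : l i - (l i - d) = d := by omega
    refine ⟨canonicalFilling_eq_succ_iff.mpr
      ⟨show m i ≤ l i - d ∧ l i - d < l i by omega, by rw [hd']; exact hc⟩, ?_⟩
    split_ifs at hi with hJ
    · rcases Nat.lt_or_eq_of_le (Nat.lt_succ_iff.mp hi) with hiI | rfl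
      · exact Or.inl hiI
      · exact Or.inr ⟨rfl, by omega⟩
    · exact Or.inl hi
  calc _ = Nat.card S := Nat.card_congr
          { toFun := fun p => ⟨_, hto p⟩
            invFun := fun q => ⟨(q.1.2, l q.1.2 - q.1.1), hinv q⟩
            left_inv := fun ⟨⟨i, j⟩, hT, _⟩ => by
              have := (canonicalFilling_eq_succ_iff.mp hT).1.2
              ext <;> simp only at this ⊢; omega
            right_inv := fun ⟨⟨d, i⟩, hq⟩ => by
              simp only [S, mem_sigma, mem_Icc, mem_filter] at hq
              exact Subtype.ext (Sigma.ext (by dsimp only; omega) HEq.rfl) }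
    _ = ∑ d ∈ Icc 1 B, if v < count (fun i => d ≤ l i - m i) (t d) then 1 else 0 := by
        rw [Nat.card_eq_finsetCard, Finset.card_sigma]
        exact sum_congr rfl fun d _ => card_filter_count_eq (fun i => d ≤ l i - m i) v (t d)
    _ = _ := (card_filter _ _).symm

lemma natCard_canonicalFilling_prefix_succ_le {B : ℕ} (hB : ∀ i, l i ≤ B) (I J k : ℕ) :
    Nat.card {p : ℕ × ℕ //
        canonicalFilling l m p.1 p.2 = k + 2 ∧ (p.1 < I ∨ (p.1 = I ∧ J ≤ p.2))} ≤
      Nat.card {p : ℕ × ℕ //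
        canonicalFilling l m p.1 p.2 = k + 1 ∧ (p.1 < I ∨ (p.1 = I ∧ J ≤ p.2))} := by
  rw [natCard_canonicalFilling_prefix hB, natCard_canonicalFilling_prefix hB]
  exact card_le_card (monotone_filter_right _ fun d _ hd => by omega)

lemma natCard_canonicalFilling_eq {a : ℕ → ℕ} (hl : IsPartition l) (ha : IsPartition a)
    (hperm : ∀ k : ℕ,
      Nat.card {i : ℕ // l i - m i = k + 1} = Nat.card {i : ℕ // a i = k + 1}) (k : ℕ) :
    Nat.card {p : ℕ × ℕ // canonicalFilling l m p.1 p.2 = k + 1} = a k := by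
  obtain ⟨N, hlN, haN⟩ : ∃ N, (∀ i, N ≤ i → l i = 0) ∧ ∀ i, N ≤ i → a i = 0 := by
    obtain ⟨N₁, h₁⟩ := hl.2
    obtain ⟨N₂, h₂⟩ := ha.2
    exact ⟨max N₁ N₂, fun i hi => h₁ i (le_of_max_le_left hi),
      fun i hi => h₂ i (le_of_max_le_right hi)⟩
  set B := l 0 + a 0
  have hlB : ∀ i, l i ≤ B := fun i => (hl.1 (zero_le i)).trans (le_add_right le_rfl)
  have haB : ∀ i, a i ≤ B := fun i => (ha.1 (zero_le i)).trans (le_add_left le_rfl)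
  have hrow : ∀ p : ℕ × ℕ, canonicalFilling l m p.1 p.2 = k + 1 → p.1 < N := fun p hp => by
    have hlp := (canonicalFilling_eq_succ_iff.mp hp).1.2
    by_contra h
    rw [hlN _ (not_lt.mp h)] at hlp
    omega
  have hcol : ∀ d, 0 < d → (k < count (fun i => d ≤ l i - m i)
      (if 0 + d ≤ l N then N + 1 else N) ↔ d ≤ a k) := fun d hd => by
    rw [if_neg (by rw [hlN N le_rfl]; omega),
      count_le_eq_of_natCard_eq (g := a) (fun i hi => by simp [hlN i hi]) haN
        (fun i => (Nat.sub_le _ _).trans (hlB i)) haB hperm hd,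
      lt_count_le_iff ha.1 haN hd]
  calc _ = Nat.card {p : ℕ × ℕ //
          canonicalFilling l m p.1 p.2 = k + 1 ∧ (p.1 < N ∨ (p.1 = N ∧ 0 ≤ p.2))} :=
        Nat.card_congr (Equiv.subtypeEquivRight fun p =>
          ⟨fun h => ⟨h, .inl (hrow p h)⟩, And.left⟩)
    _ = #{d ∈ Icc 1 B | k < count (fun i => d ≤ l i - m i)
          (if 0 + d ≤ l N then N + 1 else N)} := natCard_canonicalFilling_prefix hlB N 0 k
    _ = #(Icc 1 (a k)) := by
        congr 1
        ext d
        simp only [mem_filter, mem_Icc]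
        constructor
        · rintro ⟨hd, hk⟩
          exact ⟨hd.1, (hcol d hd.1).mp hk⟩
        · rintro hd
          exact ⟨⟨hd.1, hd.2.trans (haB k)⟩, (hcol d hd.1).mpr hd.2⟩
    _ = a k := by simp

end CanonicalFilling

lemma IsPartition.finite_inSkew {l : ℕ → ℕ} (hl : IsPartition l) (m : ℕ → ℕ) :
    {p | InSkew l m p}.Finite := by
  obtain ⟨N, hN⟩ := hl.2
  refine ((Set.finite_Iio N).prod (Set.finite_Iio (l 0))).subset fun p ⟨_, hp⟩ => ?_
  have := hl.1 (zero_le p.1)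
  refine ⟨?_, by simp only [Set.mem_Iio]; omega⟩
  by_contra h
  rw [hN _ (not_lt.mp h)] at hp
  omega

lemma IsLR.entry_le {l m n : ℕ → ℕ} {T : ℕ → ℕ → ℕ} (hT : IsLR l m n T)
    (hS : {p | InSkew l m p}.Finite) {M : ℕ} (hM : ∀ k, M ≤ k → n k = 0) (p : ℕ × ℕ) :
    T p.1 p.2 ≤ M := by
  by_contra h
  have hfin : Finite {q : ℕ × ℕ // T q.1 q.2 = T p.1 p.2 - 1 + 1} :=
    (hS.subset fun q (hq : T q.1 q.2 = _) => (hT.support q).mp (by omega)).to_subtype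
  have hcard := hT.content (T p.1 p.2 - 1)
  rw [hM _ (by omega)] at hcard
  exact (Nat.card_pos_iff.mpr ⟨⟨p, by omega⟩, hfin⟩).ne' hcard

lemma finite_isLR {l m n : ℕ → ℕ} (hS : {p | InSkew l m p}.Finite)
    (hn : ∃ M, ∀ k, M ≤ k → n k = 0) : Finite {T // IsLR l m n T} := by
  obtain ⟨M, hM⟩ := hn
  have := hS.to_subtype
  refine Finite.of_injective (fun T (p : {p | InSkew l m p}) =>
    (⟨T.1 p.1.1 p.1.2, Nat.lt_succ_of_le (T.2.entry_le hS hM p)⟩ : Fin (M + 1))) fun T T' h => ?_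
  ext i j
  by_cases hp : InSkew l m (i, j)
  · exact congrArg Fin.val (congrFun h ⟨(i, j), hp⟩)
  · rw [not_ne_iff.mp (mt (T.2.support (i, j)).mp hp),
      not_ne_iff.mp (mt (T'.2.support (i, j)).mp hp)]

lemma isLR_canonicalFilling {l m a : ℕ → ℕ} (hl : IsPartition l) (ha : IsPartition a)
    (hperm : ∀ k : ℕ,
      Nat.card {i : ℕ // l i - m i = k + 1} = Nat.card {i : ℕ // a i = k + 1}) :
    IsLR l m a (canonicalFilling l m) where
  support := canonicalFilling_ne_zero_iff
  row_weak _ _ := canonicalFilling_le_succ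
  col_strict _ _ := canonicalFilling_lt_succ hl.1
  content := natCard_canonicalFilling_eq hl ha hperm
  lattice := natCard_canonicalFilling_prefix_succ_le fun i => hl.1 (zero_le i)

theorem stmt1_general (l m a : ℕ → ℕ) (hl : IsPartition l) (ha : IsPartition a)
    (hperm : ∀ k : ℕ,
      Nat.card {i : ℕ // l i - m i = k + 1} = Nat.card {i : ℕ // a i = k + 1}) :
    LR l m a ≠ 0 :=
  Nat.card_ne_zero.mpr
    ⟨⟨⟨_, isLR_canonicalFilling hl ha hperm⟩⟩, finite_isLR (hl.finite_inSkew m) ha.2⟩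

/-- If `a` is the partition obtained by sorting the (positive) row lengths of
the skew diagram `l / m` into weakly decreasing order, then `c(l; m, a) ≠ 0`. -/
theorem stmt1 (l m a : ℕ → ℕ) (hl : IsPartition l) (hm : IsPartition m)
    (hml : ∀ i, m i ≤ l i) (ha : IsPartition a)
    (hperm : ∀ k : ℕ,
      Nat.card {i : ℕ // l i - m i = k + 1} = Nat.card {i : ℕ // a i = k + 1}) :
    LR l m a ≠ 0 :=
  stmt1_general l m a hl ha hperm
end

section
/- A rectangle (m^l) is contained (as a subdiagram, possibly after rotation by 180°) in a skew diagram λ/μ if and only if there exists an index j such that λ_{j+l−1} − μ_j ≥ m (with the convention μ_j = 0 for j beyond the length of μ). In words, the maximal rectangles contained in a skew diagram are detected by comparing row j of μ with row j+l−1 of λ. -/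
/-!
Whichever way the rectangle is placed, its upper-left box `(r, c)` and lower-right box
`(r + L - 1, c + M - 1)` lie in `l / m`, so `m r ≤ c` and `c + M ≤ l (r + L - 1)`.
Conversely, since `l` and `m` are weakly decreasing, the rectangle with upper-left box
`(j, m j)` fits as soon as its last row does, i.e. as soon as `M + m j ≤ l (j + L - 1)`.
-/

theorem IsPartition.antitone {f : ℕ → ℕ} (hf : IsPartition f) : Antitone f :=
  fun _ _ h => hf.1 h

theorem InSkew.add_le_of_corners {l m : ℕ → ℕ} {r c L M : ℕ} (h₀ : InSkew l m (r, c))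
    (h₁ : InSkew l m (r + (L - 1), c + (M - 1))) : M + m r ≤ l (r + (L - 1)) := by
  have hr : m r ≤ c := h₀.1
  have hr' : c + (M - 1) < l (r + (L - 1)) := h₁.2
  omega

theorem inSkew_rect_of_add_le {l m : ℕ → ℕ} (hl : Antitone l) (hm : Antitone m) {j L M : ℕ}
    (h : M + m j ≤ l (j + (L - 1))) {i k : ℕ} (hi : i < L) (hk : k < M) :
    InSkew l m (j + i, m j + k) := by
  have hmi : m (j + i) ≤ m j := hm (Nat.le_add_right j i)
  have hli : l (j + (L - 1)) ≤ l (j + i) := hl (by omega)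
  exact ⟨show m (j + i) ≤ m j + k by omega, show m j + k < l (j + i) by omega⟩

theorem ContainedIn.exists_corners {l m : ℕ → ℕ} {L M : ℕ} (hL : 1 ≤ L) (hM : 1 ≤ M)
    (h : ContainedIn (fun i => if i < L then M else 0) l m) :
    ∃ r c, InSkew l m (r, c) ∧ InSkew l m (r + (L - 1), c + (M - 1)) := by
  have hcorner : ∀ {i j}, i ≤ L - 1 → j ≤ M - 1 → j < (if i < L then M else 0) := by
    intro i j hi hj
    rw [if_pos (by omega)]
    omega
  rcases h with ⟨r, c, h⟩ | ⟨r, c, h⟩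
  · exact ⟨r, c, h 0 0 (hcorner (Nat.zero_le _) (Nat.zero_le _)),
      h (L - 1) (M - 1) (hcorner le_rfl le_rfl)⟩
  · obtain ⟨hLr, hMc, hlow⟩ := h (L - 1) (M - 1) (hcorner le_rfl le_rfl)
    have hup := (h 0 0 (hcorner (Nat.zero_le _) (Nat.zero_le _))).2.2
    refine ⟨r - (L - 1), c - (M - 1), hlow, ?_⟩
    rwa [Nat.sub_add_cancel hLr, Nat.sub_add_cancel hMc]

theorem stmt6_general (l m : ℕ → ℕ) (hl : IsPartition l) (hm : IsPartition m)
    (M L : ℕ) (hM : 1 ≤ M) (hL : 1 ≤ L) :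
    ContainedIn (fun i => if i < L then M else 0) l m ↔
      ∃ j : ℕ, M + m j ≤ l (j + (L - 1)) := by
  constructor
  · intro h
    obtain ⟨r, c, h₀, h₁⟩ := h.exists_corners hL hM
    exact ⟨r, h₀.add_le_of_corners h₁⟩
  · rintro ⟨j, hj⟩
    refine Or.inl ⟨j, m j, fun i k hk => ?_⟩
    dsimp only at hk
    by_cases hi : i < L
    · rw [if_pos hi] at hk
      exact inSkew_rect_of_add_le hl.antitone hm.antitone hj hi hk
    · rw [if_neg hi] at hk
      exact absurd hk (Nat.not_lt_zero k)

/-- A rectangle `(M^L)` is contained in the skew diagram `l / m` if and only if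
there is an index `j` with `l (j + (L-1)) - m j ≥ M` (0-indexed rows). -/
theorem stmt6 (l m : ℕ → ℕ) (hl : IsPartition l) (hm : IsPartition m)
    (hml : ∀ i, m i ≤ l i) (M L : ℕ) (hM : 1 ≤ M) (hL : 1 ≤ L) :
    ContainedIn (fun i => if i < L then M else 0) l m ↔
      ∃ j : ℕ, M + m j ≤ l (j + (L - 1)) :=
  stmt6_general l m hl hm M L hM hL
end
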